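/- arXiv:2510.23231 — 3 statements merged into one kernel-verified Lean document; each statement's English description precedes it below -/
import Mathlib

section
/- For the 2×2 block eigenvalue problem arising from the P1 discontinuous Galerkin discretization of linear advection on two unit cells with shifted boundary correction at distance d, the characteristic polynomial of the semi-discrete operator factors as P(λ) = (λ² + 4λ + 6)(λ² − 6λd + 4λ + 6)/144, where the first factor corresponds to the interior cell and only the second factor depends on d. -/
open Matrix

/-- P1 Legendre mass matrix on a unit cell (basis 1, x - 1/2). -/
noncomputable def M1 : Matrix (Fin 2) (Fin 2) ℝ := !![1, 0; 0, 1/12]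

/-- Interior-cell block K^s - K^R. -/
noncomputable def Bint : Matrix (Fin 2) (Fin 2) ℝ := !![-1, -1/2; 1/2, -1/4]

/-- Boundary-cell block K^s - K^R + K^{SB}(d). -/
noncomputable def Abnd (d : ℝ) : Matrix (Fin 2) (Fin 2) ℝ :=
  !![-1, -1/2 - d; 1/2, -1/4 + d/2]

/-- Upwind coupling block K^L. -/
noncomputable def KL : Matrix (Fin 2) (Fin 2) ℝ := !![1, 1/2; -1/2, -1/4]

/-- Global mass matrix. -/
noncomputable def Mglob : Matrix (Fin 2 ⊕ Fin 2) (Fin 2 ⊕ Fin 2) ℝ :=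
  Matrix.fromBlocks M1 0 0 M1

/-- Global stiffness matrix with shifted boundary correction at distance d. -/
noncomputable def Kglob (d : ℝ) : Matrix (Fin 2 ⊕ Fin 2) (Fin 2 ⊕ Fin 2) ℝ :=
  Matrix.fromBlocks (Abnd d) 0 KL Bint

/-- The characteristic polynomial of the two-cell P1 DG semi-discrete operator with
shifted boundary correction factors as
P(λ) = (λ² + 4λ + 6)(λ² − 6λd + 4λ + 6)/144, the first factor coming from the
interior cell and only the second factor depending on d. -/
theorem charpoly_factorization_P1_shifted_boundary (d lam : ℝ) :
    (Kglob d - lam • Mglob).det =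
      (lam ^ 2 + 4 * lam + 6) * (lam ^ 2 - 6 * lam * d + 4 * lam + 6) / 144 ∧
    (Bint - lam • M1).det = (lam ^ 2 + 4 * lam + 6) / 12 ∧
    (Abnd d - lam • M1).det = (lam ^ 2 - 6 * lam * d + 4 * lam + 6) / 12 := by
  have h1 : (Bint - lam • M1).det = (lam ^ 2 + 4 * lam + 6) / 12 := by
    simp [Bint, M1, Matrix.det_fin_two, Matrix.smul_apply]; ring
  have h2 : (Abnd d - lam • M1).det = (lam ^ 2 - 6 * lam * d + 4 * lam + 6) / 12 := by
    simp [Abnd, M1, Matrix.det_fin_two, Matrix.smul_apply]; ring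
  refine ⟨?_, h1, h2⟩
  have : Kglob d - lam • Mglob =
      Matrix.fromBlocks (Abnd d - lam • M1) 0 KL (Bint - lam • M1) := by
    simp [Kglob, Mglob, Matrix.fromBlocks_smul, sub_eq_add_neg, Matrix.fromBlocks_neg, Matrix.fromBlocks_add]
  rw [this, Matrix.det_fromBlocks_zero₁₂, h1, h2]; ring
end

section
/- The polynomial λ² − 6λd + 4λ + 6 (with real parameter d) has both roots with strictly negative real part if and only if d < 2/3. -/
/-- The boundary-cell quadratic λ² − 6λd + 4λ + 6 of the P1 DG scheme with shifted
boundary correction has both roots with strictly negative real part iff d < 2/3. -/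
theorem boundary_quadratic_stable_iff (d : ℝ) :
    (∀ z : ℂ, z ^ 2 - 6 * z * (d : ℂ) + 4 * z + 6 = 0 → z.re < 0) ↔ d < 2 / 3 := by
  constructor
  · intro h
    by_contra hd
    push_neg at hd
    set b : ℝ := 4 - 6 * d with hb
    have hbne : b ≤ 0 := by simp [hb]; linarith
    by_cases hc : 24 ≤ b ^ 2
    · -- real roots
      set s : ℝ := Real.sqrt (b ^ 2 - 24) with hsdef
      have hs : s ^ 2 = b ^ 2 - 24 := Real.sq_sqrt (by linarith)
      have hsnn : 0 ≤ s := Real.sqrt_nonneg _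
      have key := h (((-b + s) / 2 : ℝ) : ℂ) ?_
      · simp at key; nlinarith
      · have : ((-b + s) / 2 : ℝ) ^ 2 - 6 * ((-b + s) / 2) * d + 4 * ((-b + s) / 2) + 6 = 0 := by
          nlinarith [hs]
        push_cast
        have := congrArg (fun r : ℝ => (r : ℂ)) this
        push_cast at this
        linear_combination this
    · push_neg at hc
      set t : ℝ := Real.sqrt (24 - b ^ 2) / 2 with htdef
      have ht : t ^ 2 = (24 - b ^ 2) / 4 := by
        rw [htdef, div_pow, Real.sq_sqrt (by linarith)]; ring
      have key := h ((-b / 2 : ℝ) + (t : ℝ) * Complex.I) ?_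
      · simp at key; nlinarith
      · apply Complex.ext <;>
          simp [Complex.add_re, Complex.add_im, Complex.mul_re, Complex.mul_im, pow_two] <;>
          nlinarith [ht]
  · intro hd z hz
    have h1 := congrArg Complex.re hz
    have h2 := congrArg Complex.im hz
    simp [Complex.mul_re, Complex.mul_im, pow_two] at h1 h2
    set x := z.re
    set y := z.im
    by_contra hx
    push_neg at hx
    have hy : y * (2 * x - 6 * d + 4) = 0 := by nlinarith
    rcases mul_eq_zero.mp hy with hy0 | hx0
    · nlinarith
    · nlinarith
end

section
/- If d > 2/3, then the quadratic λ² − 6λd + 4λ + 6 has a root with strictly positive real part, so the P1 DG semi-discrete operator with shifted boundary correction at distance d has an eigenvalue in the open right half-plane; consequently for any explicit Runge–Kutta amplification function z with z(0) = 1 and z'(0) = 1, the scheme amplifies some mode for all sufficiently small time steps, i.e., |z(λΔt)| > 1 for small Δt > 0. -/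
/-! The quadratic is `λ² + (4 - 6d) λ + 6`, so its two roots sum to `6d - 4 > 0` and one of them
has positive real part. Along the ray `t ↦ tλ` the amplification function satisfies
`Re g(tλ) = 1 + t Re λ + o(t)`, and `‖g(tλ)‖ ≥ Re g(tλ) > 1` for small `t > 0`. -/

open Filter Topology Set

lemma HasDerivAt.eventually_nhdsGT_lt {f : ℝ → ℝ} {f' a : ℝ} (hf : HasDerivAt f f' a)
    (hf' : 0 < f') : ∀ᶠ t in 𝓝[>] a, f a < f t := by
  have hslope : ∀ᶠ t in 𝓝[>] a, 0 < slope f a t :=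
    (hf.tendsto_slope.mono_left (nhdsGT_le_nhdsNE a)).eventually (eventually_gt_nhds hf')
  filter_upwards [hslope, self_mem_nhdsWithin] with t ht hat
  exact (slope_pos_iff_of_le (le_of_lt hat)).mp ht

lemma Complex.exists_root_quadratic_re_pos {b : ℂ} (hb : b.re < 0) (c : ℂ) :
    ∃ z : ℂ, z ^ 2 + b * z + c = 0 ∧ 0 < z.re := by
  obtain ⟨δ, hδ⟩ := IsAlgClosed.exists_pow_nat_eq (b ^ 2 - 4 * c) two_pos
  have hroot : ∀ s : ℂ, s ^ 2 = δ ^ 2 → ((-b + s) / 2) ^ 2 + b * ((-b + s) / 2) + c = 0 :=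
    fun s hs ↦ by linear_combination (1 / 4 : ℂ) * hs + (1 / 4 : ℂ) * hδ
  have hre_sum : ((-b + δ) / 2).re + ((-b + -δ) / 2).re = -b.re := by
    simp only [Complex.div_ofNat_re, Complex.add_re, Complex.neg_re]; ring
  by_cases hpos : 0 < ((-b + δ) / 2).re
  · exact ⟨_, hroot δ rfl, hpos⟩
  · exact ⟨_, hroot (-δ) (neg_sq δ), by linarith⟩

lemma eventually_one_lt_norm_apply_ofReal_mul {g : ℂ → ℂ} {g' lam : ℂ} (hg₀ : g 0 = 1)
    (hg : HasDerivAt g g' 0) (hlam : 0 < (g' * lam).re) :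
    ∀ᶠ t : ℝ in 𝓝[>] 0, 1 < ‖g (t * lam)‖ := by
  have hray : HasDerivAt (fun t : ℝ ↦ (t : ℂ) * lam) lam 0 := by
    simpa using (Complex.ofRealCLM.hasDerivAt (x := (0 : ℝ))).mul_const lam
  have hcomp : HasDerivAt (fun t : ℝ ↦ g (t * lam)) (g' * lam) 0 := by
    have hg : HasDerivAt g g' (((0 : ℝ) : ℂ) * lam) := by simpa using hg
    simpa [Function.comp_def, mul_comm] using hg.scomp (0 : ℝ) hray
  have hre : HasDerivAt (fun t : ℝ ↦ (g (t * lam)).re) (g' * lam).re 0 :=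
    Complex.reCLM.hasFDerivAt.comp_hasDerivAt (0 : ℝ) hcomp
  filter_upwards [hre.eventually_nhdsGT_lt hlam] with t ht
  simp only [Complex.ofReal_zero, zero_mul, hg₀, Complex.one_re] at ht
  exact ht.trans_le (Complex.re_le_norm _)

/-- If d > 2/3 the boundary-cell quadratic has a root λ with Re λ > 0, and for any
explicit RK amplification function g with g(0) = 1 and g'(0) = 1, the scheme
amplifies this mode for all sufficiently small time steps: |g(λΔt)| > 1. -/
theorem unstable_mode_for_large_d (d : ℝ) (hd : 2 / 3 < d) :
    ∃ lam : ℂ, (lam ^ 2 - 6 * lam * (d : ℂ) + 4 * lam + 6 = 0 ∧ 0 < lam.re) ∧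
      ∀ g : ℂ → ℂ, g 0 = 1 → HasDerivAt g 1 0 →
        ∃ ε > 0, ∀ t : ℝ, 0 < t → t < ε → 1 < ‖g ((t : ℂ) * lam)‖ := by
  have hb : (4 - 6 * (d : ℂ)).re < 0 := by
    simp only [Complex.sub_re, Complex.re_ofNat, Complex.mul_re, Complex.ofReal_re,
      Complex.im_ofNat, Complex.ofReal_im, mul_zero, sub_zero]
    linarith
  obtain ⟨lam, hroot, hlam⟩ := Complex.exists_root_quadratic_re_pos hb 6
  refine ⟨lam, ⟨by linear_combination hroot, hlam⟩, fun g hg₀ hg ↦ ?_⟩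
  have hamp := eventually_one_lt_norm_apply_ofReal_mul hg₀ hg (by rwa [one_mul])
  obtain ⟨ε, hε, hsub⟩ := mem_nhdsGT_iff_exists_Ioo_subset.mp hamp
  exact ⟨ε, hε, fun t ht htε ↦ hsub ⟨ht, htε⟩⟩
end
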